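/- Let f : ℝ → ℝ be integrable with bounded total variation, TV(f) = sup over finite partitions x_0 < x_1 < ... < x_N of Σ |f(x_i) − f(x_{i−1})| < ∞. Then for every ε > 0, ∫_ℝ | q_ε[f](x) − f(x) | dx ≤ ε · TV(f), where q_ε[f](x) = ∫_x^∞ ε^{-1} e^{(x−y)/ε} f(y) dy. -/

import Mathlib

/-!
Substituting `y = x + t`, `q_ε[f](x) - f(x)` is the average of `f(x + t) - f(x)` against the
exponential density `ε⁻¹ e^(-t/ε)` on `t > 0`, so by Tonelli the `L¹` error is at most the average
of `∫ |f(x + t) - f(x)| dx`. That translation error is at most `t · TV(f)`: pointwise,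
`|f(x + t) - f(x)|` is dominated by the increment over `[x, x + t]` of the monotone variation
function `V`, and `∫_a^b (V(x + t) - V(x)) dx = ∫_b^(b+t) V - ∫_a^(a+t) V ≤ t · TV(f)`.
The exponential density has mean `ε`.
-/

open MeasureTheory Set

theorem LocallyBoundedVariationOn.measurable {f : ℝ → ℝ}
    (hf : LocallyBoundedVariationOn f univ) : Measurable f := by
  obtain ⟨p, q, hp, hq, rfl⟩ := hf.exists_monotoneOn_sub_monotoneOn
  exact (monotoneOn_univ.1 hp).measurable.sub (monotoneOn_univ.1 hq).measurable

theorem setIntegral_Ioi_eq_setIntegral_Ioi_zero_comp_add {E : Type*} [NormedAddCommGroup E]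
    [NormedSpace ℝ E] (g : ℝ → E) (x : ℝ) :
    ∫ y in Ioi x, g y = ∫ t in Ioi 0, g (x + t) := by
  rw [← (measurePreserving_add_left volume x).setIntegral_preimage_emb
    (measurableEmbedding_addLeft x), preimage_const_add_Ioi, sub_self]

section Monotone

variable {g : ℝ → ℝ} {t : ℝ}

theorem Monotone.intervalIntegral_comp_add_sub_le (hg : Monotone g) (ht : 0 ≤ t) (a b : ℝ) :
    ∫ x in a..b, (g (x + t) - g x) ≤ t * (g (b + t) - g a) := by
  have hint : ∀ c d, IntervalIntegrable g volume c d := fun _ _ => hg.intervalIntegrable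
  have upper : ∫ x in b..b + t, g x ≤ t * g (b + t) := by
    simpa using intervalIntegral.integral_mono_on (le_add_of_nonneg_right ht) (hint _ _)
      intervalIntegrable_const fun x hx => hg hx.2
  have lower : t * g a ≤ ∫ x in a..a + t, g x := by
    simpa using intervalIntegral.integral_mono_on (le_add_of_nonneg_right ht)
      intervalIntegrable_const (hint _ _) fun x hx => hg hx.1
  have hgt : Monotone fun x => g (x + t) := fun x y hxy => hg (by linarith)
  rw [intervalIntegral.integral_sub hgt.intervalIntegrable (hint _ _),
    intervalIntegral.integral_comp_add_right,
    intervalIntegral.integral_interval_sub_interval_comm' (hint _ _) (hint _ _) (hint _ _)]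
  linarith

theorem Monotone.lintegral_comp_add_sub_le (hg : Monotone g) (ht : 0 ≤ t) {C : ℝ}
    (hC : ∀ a b, g b - g a ≤ C) :
    ∫⁻ x, ENNReal.ofReal (g (x + t) - g x) ≤ ENNReal.ofReal (t * C) := by
  have hgt : Monotone fun x => g (x + t) := fun a b hab => hg (by linarith)
  have on_Ioc : ∀ a b, a ≤ b →
      ∫⁻ x in Ioc a b, ENNReal.ofReal (g (x + t) - g x) ≤ ENNReal.ofReal (t * C) := by
    intro a b hab
    rw [← ofReal_integral_eq_lintegral_ofReal
      (hgt.intervalIntegrable.sub hg.intervalIntegrable).1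
      (ae_of_all _ fun x => sub_nonneg.2 (hg (le_add_of_nonneg_right ht))),
      ← intervalIntegral.integral_of_le hab]
    exact ENNReal.ofReal_le_ofReal ((hg.intervalIntegral_comp_add_sub_le ht a b).trans
      (mul_le_mul_of_nonneg_left (hC _ _) ht))
  have hballs : Monotone fun n : ℕ => Metric.ball (0 : ℝ) n :=
    fun m n hmn => Metric.ball_subset_ball (Nat.cast_le.2 hmn)
  rw [← setLIntegral_univ, ← Metric.iUnion_ball_nat 0,
    setLIntegral_iUnion_of_directed _ hballs.directed_le]
  refine iSup_le fun n => (lintegral_mono_set ?_).trans (on_Ioc (0 - n) (0 + n) (by simp))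
  rw [Real.ball_eq_Ioo]
  exact Ioo_subset_Ioc_self

end Monotone

theorem BoundedVariationOn.lintegral_enorm_comp_add_sub_le {f : ℝ → ℝ}
    (hf : BoundedVariationOn f univ) {t : ℝ} (ht : 0 ≤ t) :
    ∫⁻ x, ‖f (x + t) - f x‖ₑ ≤ ENNReal.ofReal t * eVariationOn f univ := by
  have hloc := hf.locallyBoundedVariationOn
  set V := variationOnFromTo f univ 0
  have hV : Monotone V := monotoneOn_univ.1 (variationOnFromTo.monotoneOn hloc (mem_univ 0))
  have hVC : ∀ a b, V b - V a ≤ (eVariationOn f univ).toReal := fun a b => by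
    rw [variationOnFromTo.sub_right hloc (mem_univ _) (mem_univ _) (mem_univ _)]
    exact (le_abs_self _).trans (variationOnFromTo.abs_le_eVariationOn hf)
  calc ∫⁻ x, ‖f (x + t) - f x‖ₑ ≤ ∫⁻ x, ENNReal.ofReal (V (x + t) - V x) := by
        refine lintegral_mono fun x => ?_
        rw [Real.enorm_eq_ofReal_abs]
        exact ENNReal.ofReal_le_ofReal (variationOnFromTo.abs_sub_le_sub_of_le hloc
          (mem_univ _) (mem_univ _) (mem_univ _) (le_add_of_nonneg_right ht))
    _ ≤ ENNReal.ofReal (t * (eVariationOn f univ).toReal) := hV.lintegral_comp_add_sub_le ht hVC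
    _ = ENNReal.ofReal t * eVariationOn f univ := by
        rw [ENNReal.ofReal_mul ht, ENNReal.ofReal_toReal hf]

section ExpKernel

variable {r : ℝ}

theorem integrableOn_mul_exp_neg_mul_Ioi (hr : 0 < r) :
    IntegrableOn (fun t => r * Real.exp (-r * t)) (Ioi 0) :=
  (exp_neg_integrableOn_Ioi 0 hr).const_mul r

theorem integral_mul_exp_neg_mul_Ioi (hr : 0 < r) :
    ∫ t in Ioi 0, r * Real.exp (-r * t) = 1 := by
  rw [integral_const_mul, integral_exp_mul_Ioi (neg_neg_of_pos hr)]
  field_simp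
  simp

theorem lintegral_ofReal_mul_exp_neg_mul_mul_Ioi (hr : 0 < r) :
    ∫⁻ t in Ioi 0, ENNReal.ofReal (r * Real.exp (-r * t)) * ENNReal.ofReal t
      = ENNReal.ofReal r⁻¹ := by
  have hval := Real.integral_rpow_mul_exp_neg_mul_Ioi (a := 2) two_pos hr
  norm_num [Real.rpow_two, ← neg_mul] at hval
  have hint := integrableOn_rpow_mul_exp_neg_mul_rpow (s := 1) (p := 1) (by norm_num) one_pos hr
  simp only [Real.rpow_one] at hint
  simp_rw [← ENNReal.ofReal_mul (by positivity : 0 ≤ r * Real.exp _)]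
  rw [← ofReal_integral_eq_lintegral_ofReal]
  · congr 1
    simp_rw [mul_assoc, integral_const_mul, mul_comm (Real.exp _), hval]
    field_simp
  · exact IntegrableOn.congr_fun (hint.const_mul r) (fun t _ => by ring) measurableSet_Ioi
  · filter_upwards [ae_restrict_mem measurableSet_Ioi] with t (ht : 0 < t)
    positivity

end ExpKernel

/-- `q_ε[f] = expAverage ε⁻¹ f`, written with the rate `r = ε⁻¹` and the shift `y = x + t`. -/
noncomputable def expAverage (r : ℝ) (f : ℝ → ℝ) (x : ℝ) : ℝ :=
  ∫ t in Ioi 0, r * Real.exp (-r * t) * f (x + t)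

namespace BoundedVariationOn

variable {f : ℝ → ℝ} {r : ℝ}

theorem enorm_expAverage_sub_le (hf : BoundedVariationOn f univ) (hr : 0 < r) (x : ℝ) :
    ‖expAverage r f x - f x‖ₑ ≤
      ∫⁻ t in Ioi 0, ENNReal.ofReal (r * Real.exp (-r * t)) * ‖f (x + t) - f x‖ₑ := by
  have hK := integrableOn_mul_exp_neg_mul_Ioi hr
  have hKf : IntegrableOn (fun t => r * Real.exp (-r * t) * f (x + t)) (Ioi 0) :=
    hK.mul_bdd
      (hf.locallyBoundedVariationOn.measurable.comp (measurable_const_add x)).aestronglyMeasurable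
      (ae_of_all _ fun t => norm_le_norm_add_norm_sub' (f (x + t)) (f x) |>.trans
        (add_le_add_right (hf.dist_le (mem_univ _) (mem_univ _)) _))
  have hsub :
      expAverage r f x - f x = ∫ t in Ioi 0, r * Real.exp (-r * t) * (f (x + t) - f x) := by
    simp_rw [mul_sub]
    rw [integral_sub hKf (hK.mul_const _), integral_mul_const, integral_mul_exp_neg_mul_Ioi hr,
      one_mul, expAverage]
  rw [hsub]
  refine (enorm_integral_le_lintegral_enorm _).trans_eq (lintegral_congr fun t => ?_)
  rw [enorm_mul, Real.enorm_of_nonneg (by positivity)]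

theorem lintegral_enorm_expAverage_sub_le (hf : BoundedVariationOn f univ) (hr : 0 < r) :
    ∫⁻ x, ‖expAverage r f x - f x‖ₑ ≤ ENNReal.ofReal r⁻¹ * eVariationOn f univ := by
  have hfm := hf.locallyBoundedVariationOn.measurable
  calc ∫⁻ x, ‖expAverage r f x - f x‖ₑ
      ≤ ∫⁻ x, ∫⁻ t in Ioi 0, ENNReal.ofReal (r * Real.exp (-r * t)) * ‖f (x + t) - f x‖ₑ :=
        lintegral_mono (hf.enorm_expAverage_sub_le hr)
    _ = ∫⁻ t in Ioi 0, ENNReal.ofReal (r * Real.exp (-r * t)) * ∫⁻ x, ‖f (x + t) - f x‖ₑ := by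
        rw [lintegral_lintegral_swap (by fun_prop)]
        simp_rw [lintegral_const_mul' _ _ ENNReal.ofReal_ne_top]
    _ ≤ ∫⁻ t in Ioi 0, ENNReal.ofReal (r * Real.exp (-r * t)) *
          (ENNReal.ofReal t * eVariationOn f univ) :=
        setLIntegral_mono' measurableSet_Ioi fun t ht => by
          gcongr
          exact hf.lintegral_enorm_comp_add_sub_le (le_of_lt ht)
    _ = ENNReal.ofReal r⁻¹ * eVariationOn f univ := by
        simp_rw [← mul_assoc]
        rw [lintegral_mul_const _ (by fun_prop), lintegral_ofReal_mul_exp_neg_mul_mul_Ioi hr]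

end BoundedVariationOn

theorem exp_average_L1_error_general
    (f : ℝ → ℝ)
    (hTV : eVariationOn f univ ≠ ⊤)
    (ε : ℝ) (hε : 0 < ε)
    (q : ℝ → ℝ)
    (hq : ∀ x, q x = ∫ y in Ioi x, ε⁻¹ * Real.exp ((x - y) / ε) * f y) :
    ∫ x : ℝ, |q x - f x| ≤ ε * (eVariationOn f univ).toReal := by
  have hq_avg : q = expAverage ε⁻¹ f := funext fun x => by
    rw [hq, setIntegral_Ioi_eq_setIntegral_Ioi_zero_comp_add, expAverage]
    congr! 4 with t
    rw [show (x - (x + t)) / ε = -ε⁻¹ * t by ring]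
  have hL1 := (show BoundedVariationOn f univ from hTV).lintegral_enorm_expAverage_sub_le
    (inv_pos.2 hε)
  rw [inv_inv, ← hq_avg] at hL1
  calc ∫ x, |q x - f x| ≤ (∫⁻ x, ‖q x - f x‖ₑ).toReal := by
        simpa [Real.enorm_eq_ofReal_abs] using
          (le_abs_self _).trans (norm_integral_le_lintegral_norm fun x => |q x - f x|)
    _ ≤ (ENNReal.ofReal ε * eVariationOn f univ).toReal :=
        ENNReal.toReal_mono (ENNReal.mul_ne_top ENNReal.ofReal_ne_top hTV) hL1
    _ = ε * (eVariationOn f univ).toReal := by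
        rw [ENNReal.toReal_mul, ENNReal.toReal_ofReal hε.le]

/-- For an integrable function `f` of bounded total variation,
`∫ |q_ε[f] - f| ≤ ε · TV(f)`, where `q_ε[f](x) = ∫_x^∞ ε⁻¹ e^((x-y)/ε) f(y) dy`. -/
theorem exp_average_L1_error
    (f : ℝ → ℝ) (hf : Integrable f)
    (hTV : eVariationOn f univ ≠ ⊤)
    (ε : ℝ) (hε : 0 < ε)
    (q : ℝ → ℝ)
    (hq : ∀ x, q x = ∫ y in Ioi x, ε⁻¹ * Real.exp ((x - y) / ε) * f y) :
    ∫ x : ℝ, |q x - f x| ≤ ε * (eVariationOn f univ).toReal :=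
  exp_average_L1_error_general f hTV ε hε q hq
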